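/- arXiv:1409.7582 — 9 statements merged into one kernel-verified Lean document; each statement's English description precedes it below -/
import Mathlib

section
/- Let q ∈ (0,1) and let n ≥ 2 be an integer. Set P(s_i) = (1-q)^{i+1} · q / (1 - (1-q)^n - q) for 0 ≤ i ≤ n-2 and P(s_{n-1}) = (1-q)^n / (1 - (1-q)^n - q). Then the average source-message length ∑_{i=0}^{n-2} P(s_i)·(i+1) + P(s_{n-1})·(n-1) equals 1/q. -/
/-! With `r = 1 - q` the normaliser is `D = 1 - r ^ n - q = r - r ^ n`, and `D q` times the
average length is `q² ∑_{i<n-1} (i+1) r^(i+1) + q (n-1) r^n`. The closed form of the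
arithmetic–geometric sum, `(1-r)² ∑_{i<m} (i+1) r^i = 1 - (m+1) r^m + m r^(m+1)`,
collapses this to `r - r ^ n = D`. -/

open Finset

theorem sum_range_add_one_mul_pow_mul_one_sub_sq {R : Type*} [CommRing R] (x : R) (m : ℕ) :
    (∑ i ∈ range m, ((i : R) + 1) * x ^ i) * (1 - x) ^ 2 =
      1 - ((m : R) + 1) * x ^ m + m * x ^ (m + 1) := by
  induction m with
  | zero => simp
  | succ m ih =>
    rw [sum_range_succ, add_mul, ih]
    push_cast
    ring

/-- The average source-message length of the MZRL code:
`∑_{i=0}^{n-2} P(s_i)(i+1) + P(s_{n-1})(n-1) = 1/q`, where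
`P(s_i) = (1-q)^{i+1} q / (1-(1-q)^n - q)` and
`P(s_{n-1}) = (1-q)^n / (1-(1-q)^n - q)`. -/
theorem stmt_4 (q : ℝ) (hq : q ∈ Set.Ioo (0:ℝ) 1) (n : ℕ) (hn : 2 ≤ n) :
    (∑ i ∈ Finset.range (n - 1),
        (1 - q) ^ (i + 1) * q / (1 - (1 - q) ^ n - q) * ((i : ℝ) + 1)) +
      (1 - q) ^ n / (1 - (1 - q) ^ n - q) * ((n : ℝ) - 1) = 1 / q := by
  obtain ⟨hq0, hq1⟩ := hq
  obtain ⟨m, rfl⟩ : ∃ m, n = m + 2 := ⟨n - 2, by omega⟩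
  have hden : 1 - (1 - q) ^ (m + 2) - q ≠ 0 := by
    have := pow_lt_self_of_lt_one₀ (sub_pos.2 hq1) (sub_lt_self 1 hq0) (by omega : 1 < m + 2)
    linarith
  have hsum : ∑ i ∈ range (m + 1),
      (1 - q) ^ (i + 1) * q / (1 - (1 - q) ^ (m + 2) - q) * ((i : ℝ) + 1) =
        (1 - q) * q / (1 - (1 - q) ^ (m + 2) - q) *
          ∑ i ∈ range (m + 1), ((i : ℝ) + 1) * (1 - q) ^ i := by
    rw [mul_sum]
    exact sum_congr rfl fun i _ => by ring
  have hclosed := sum_range_add_one_mul_pow_mul_one_sub_sq (1 - q) (m + 1)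
  rw [sub_sub_cancel] at hclosed
  rw [show m + 2 - 1 = m + 1 from rfl, hsum, eq_div_iff hq0.ne']
  field_simp
  push_cast at hclosed ⊢
  linear_combination (1 - q) * hclosed
end

section
/- For every q ∈ (0, 0.1], define L̄(z) = q·z / (1 - (1-q)^{2^z - 1}) for real z ∈ [1, ∞). Then there exists a real number z₀ with z₀ > -log₂(-ln(1-q)) such that the derivative of L̄ is negative on [1, z₀), zero at z₀, and positive on (z₀, ∞); consequently L̄ is strictly decreasing on [1, z₀], strictly increasing on [z₀, ∞), and attains its global minimum on [1, ∞) exactly at z = z₀. -/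
/-!
Write `a = -log (1 - q)`, so that `L̄(z) = q z / D(z)` with `D(z) = 1 - exp (-a (2^z - 1))`, and
`L̄' = q G / D²` with `G = D - z D'`. Then `G(0) = 0` and `G' = -z D''` has the sign of
`a 2^z - 1`, so `G` decreases on `[0, -log₂ a]` and increases afterwards, towards its limit `1`.
As `a < 1`, the turning point `-log₂ a` is positive, hence `G` is negative on `(0, z₀)` and positive
on `(z₀, ∞)` for a unique zero `z₀ > -log₂ a`, and `L̄'` has the same sign as `G`.
-/

open Real Set Filter Topology

lemma lt_of_strictAntiOn_Icc_of_strictMonoOn_Ici {α β : Type*} [LinearOrder α] [Preorder β]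
    {f : α → β} {a x₀ x : α} (hanti : StrictAntiOn f (Icc a x₀)) (hmono : StrictMonoOn f (Ici x₀))
    (hx : a ≤ x) (hne : x ≠ x₀) : f x₀ < f x := by
  rcases hne.lt_or_gt with h | h
  · exact hanti ⟨hx, h.le⟩ ⟨hx.trans h.le, le_rfl⟩ h
  · exact hmono self_mem_Ici h.le h

namespace MZRL

/-- With `a = -log (1 - q)` this is `(1 - q) ^ (2 ^ z - 1)`. -/
noncomputable def missProb (a z : ℝ) : ℝ := exp (-(a * (2 ^ z - 1)))

noncomputable def derivNum (a z : ℝ) : ℝ :=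
  1 - missProb a z - z * (a * log 2 * 2 ^ z * missProb a z)

variable {a z : ℝ}

lemma missProb_pos (a z : ℝ) : 0 < missProb a z := exp_pos _

lemma missProb_lt_one (ha : 0 < a) (hz : 0 < z) : missProb a z < 1 := by
  have : 1 < (2 : ℝ) ^ z := one_lt_rpow one_lt_two hz
  rw [missProb, exp_lt_one_iff]
  nlinarith

lemma hasDerivAt_missProb (a z : ℝ) :
    HasDerivAt (missProb a) (-(a * log 2 * 2 ^ z * missProb a z)) z := by
  have h := ((((hasStrictDerivAt_const_rpow two_pos z).hasDerivAt.sub_const 1).const_mul a).neg).exp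
  exact h.congr_deriv (by simp only [Pi.neg_apply, missProb]; ring)

lemma hasDerivAt_derivNum (a z : ℝ) :
    HasDerivAt (derivNum a)
      (z * a * log 2 ^ 2 * 2 ^ z * missProb a z * (a * 2 ^ z - 1)) z := by
  have h2 := (hasStrictDerivAt_const_rpow two_pos z).hasDerivAt
  have hE := hasDerivAt_missProb a z
  have h := ((hasDerivAt_const z 1).sub hE).sub
    ((hasDerivAt_id z).mul (((h2.const_mul (a * log 2))).mul hE))
  exact h.congr_deriv (by simp only [id, Pi.mul_apply]; ring)

lemma derivNum_zero (a : ℝ) : derivNum a 0 = 0 := by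
  simp [derivNum, missProb]

lemma mul_two_rpow_neg_logb (ha : 0 < a) : a * 2 ^ (-logb 2 a) = 1 := by
  rw [rpow_neg two_pos.le, rpow_logb two_pos (by norm_num) ha, mul_inv_cancel₀ ha.ne']

lemma derivNum_strictAntiOn (ha : 0 < a) : StrictAntiOn (derivNum a) (Icc 0 (-logb 2 a)) := by
  refine strictAntiOn_of_hasDerivWithinAt_neg (convex_Icc _ _)
    (fun z _ => (hasDerivAt_derivNum a z).continuousAt.continuousWithinAt)
    (fun z _ => (hasDerivAt_derivNum a z).hasDerivWithinAt) fun z hz => ?_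
  rw [interior_Icc] at hz
  have hlt : a * 2 ^ z - 1 < 0 := by
    have := mul_lt_mul_of_pos_left (rpow_lt_rpow_of_exponent_lt one_lt_two hz.2) ha
    linarith [mul_two_rpow_neg_logb ha]
  have := missProb_pos a z
  have := log_pos one_lt_two
  exact mul_neg_of_pos_of_neg (by have := hz.1; positivity) hlt

lemma derivNum_strictMonoOn (ha : 0 < a) (ha1 : a ≤ 1) :
    StrictMonoOn (derivNum a) (Ici (-logb 2 a)) := by
  refine strictMonoOn_of_hasDerivWithinAt_pos (convex_Ici _)
    (fun z _ => (hasDerivAt_derivNum a z).continuousAt.continuousWithinAt)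
    (fun z _ => (hasDerivAt_derivNum a z).hasDerivWithinAt) fun z hz => ?_
  rw [interior_Ici] at hz
  have hlt : 0 < a * 2 ^ z - 1 := by
    have := mul_lt_mul_of_pos_left (rpow_lt_rpow_of_exponent_lt one_lt_two hz) ha
    linarith [mul_two_rpow_neg_logb ha]
  have := missProb_pos a z
  have := log_pos one_lt_two
  have hz0 : 0 < z := (neg_nonneg.2 (logb_nonpos one_lt_two ha.le ha1)).trans_lt hz
  positivity

lemma missProb_eq (a z : ℝ) : missProb a z = exp a * exp (-a * 2 ^ z) := by
  rw [missProb, ← exp_add]; ring_nf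

lemma tendsto_self_mul_two_rpow_mul_exp_atTop (ha : 0 < a) :
    Tendsto (fun z : ℝ => z * 2 ^ z * exp (-a * 2 ^ z)) atTop (𝓝 0) := by
  have hsq := (tendsto_rpow_mul_exp_neg_mul_atTop_nhds_zero 2 a ha).comp
    (tendsto_rpow_atTop_of_base_gt_one 2 one_lt_two)
  refine squeeze_zero' ?_ ?_ hsq
  · filter_upwards [eventually_ge_atTop 0] with z hz
    positivity
  · filter_upwards [eventually_ge_atTop 1] with z hz
    have hz2 : 1 + z ≤ 2 ^ z := by
      simpa [one_add_one_eq_two] using one_add_mul_self_le_rpow_one_add (s := 1) (by norm_num) hz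
    rw [Function.comp_apply, rpow_two, sq]
    gcongr
    linarith

lemma tendsto_derivNum_atTop (ha : 0 < a) : Tendsto (derivNum a) atTop (𝓝 1) := by
  have hexp : Tendsto (fun z : ℝ => exp (-a * 2 ^ z)) atTop (𝓝 0) := by
    simpa only [neg_mul, Function.comp_def] using tendsto_exp_neg_atTop_nhds_zero.comp
      ((tendsto_rpow_atTop_of_base_gt_one 2 one_lt_two).const_mul_atTop ha)
  have h := ((tendsto_const_nhds (x := 1)).sub (hexp.const_mul (exp a))).sub
    ((tendsto_self_mul_two_rpow_mul_exp_atTop ha).const_mul (a * log 2 * exp a))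
  simp only [mul_zero, sub_zero] at h
  refine h.congr fun z => ?_
  rw [derivNum, missProb_eq]
  ring

lemma exists_derivNum_sign_change (ha : 0 < a) (ha1 : a < 1) :
    ∃ z₀, -logb 2 a < z₀ ∧ (∀ z ∈ Ioo 0 z₀, derivNum a z < 0) ∧ derivNum a z₀ = 0 ∧
      ∀ z ∈ Ioi z₀, 0 < derivNum a z := by
  set zs := -logb 2 a
  have hzs : 0 < zs := neg_pos.2 (logb_neg one_lt_two ha ha1)
  have hanti := derivNum_strictAntiOn ha
  have hmono := derivNum_strictMonoOn ha ha1.le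
  have hneg_le : ∀ z ∈ Ioc 0 zs, derivNum a z < 0 := fun z hz =>
    derivNum_zero a ▸ hanti ⟨le_rfl, hzs.le⟩ ⟨hz.1.le, hz.2⟩ hz.1
  obtain ⟨M, hM, hzsM⟩ := ((tendsto_derivNum_atTop ha).eventually (lt_mem_nhds one_pos)).and
    (eventually_ge_atTop zs) |>.exists
  obtain ⟨z₀, hz₀, hGz₀⟩ := intermediate_value_Icc hzsM
    (fun z _ => (hasDerivAt_derivNum a z).continuousAt.continuousWithinAt)
    ⟨(hneg_le zs ⟨hzs, le_rfl⟩).le, hM.le⟩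
  have hzsz₀ : zs < z₀ := hz₀.1.lt_of_ne fun h => (hneg_le zs ⟨hzs, le_rfl⟩).ne (h ▸ hGz₀)
  refine ⟨z₀, hzsz₀, fun z hz => ?_, hGz₀, fun z hz => ?_⟩
  · rcases le_or_gt z zs with h | h
    · exact hneg_le z ⟨hz.1, h⟩
    · exact hGz₀ ▸ hmono h.le hzsz₀.le hz.2
  · exact hGz₀ ▸ hmono hzsz₀.le (hzsz₀.trans hz).le hz

/-- `L̄` with `a = -log (1 - q)` as a separate parameter. -/
noncomputable def codelength (q a z : ℝ) : ℝ := q * z / (1 - missProb a z)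

lemma hasDerivAt_codelength (q : ℝ) (ha : 0 < a) (hz : 0 < z) :
    HasDerivAt (codelength q a) (q * derivNum a z / (1 - missProb a z) ^ 2) z := by
  have hD : 1 - missProb a z ≠ 0 := (sub_pos.2 (missProb_lt_one ha hz)).ne'
  have h := ((hasDerivAt_id z).const_mul q).div ((hasDerivAt_missProb a z).const_sub 1) hD
  exact h.congr_deriv (by simp only [id, derivNum]; ring)

theorem exists_deriv_codelength_sign_change {q : ℝ} (hq : 0 < q) (ha : 0 < a) (ha1 : a < 1) :
    ∃ z₀, -logb 2 a < z₀ ∧ (∀ z ∈ Ioo 0 z₀, deriv (codelength q a) z < 0) ∧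
      deriv (codelength q a) z₀ = 0 ∧ (∀ z ∈ Ioi z₀, 0 < deriv (codelength q a) z) ∧
      StrictAntiOn (codelength q a) (Ioc 0 z₀) ∧ StrictMonoOn (codelength q a) (Ici z₀) := by
  obtain ⟨z₀, hz₀, hneg, hzero, hpos⟩ := exists_derivNum_sign_change ha ha1
  have hz₀pos : 0 < z₀ := (neg_pos.2 (logb_neg one_lt_two ha ha1)).trans hz₀
  have hcont : ContinuousOn (codelength q a) (Ioi 0) := fun z hz =>
    (hasDerivAt_codelength q ha hz).continuousAt.continuousWithinAt
  have hD : ∀ z, 0 < z → 0 < (1 - missProb a z) ^ 2 := fun z hz =>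
    pow_pos (sub_pos.2 (missProb_lt_one ha hz)) 2
  have hderiv_neg : ∀ z ∈ Ioo 0 z₀, deriv (codelength q a) z < 0 := fun z hz => by
    rw [(hasDerivAt_codelength q ha hz.1).deriv]
    exact div_neg_of_neg_of_pos (mul_neg_of_pos_of_neg hq (hneg z hz)) (hD z hz.1)
  have hderiv_pos : ∀ z ∈ Ioi z₀, 0 < deriv (codelength q a) z := fun z hz => by
    rw [(hasDerivAt_codelength q ha (hz₀pos.trans hz)).deriv]
    exact div_pos (mul_pos hq (hpos z hz)) (hD z (hz₀pos.trans hz))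
  have hderiv_zero : deriv (codelength q a) z₀ = 0 := by
    rw [(hasDerivAt_codelength q ha hz₀pos).deriv, hzero, mul_zero, zero_div]
  refine ⟨z₀, hz₀, hderiv_neg, hderiv_zero, hderiv_pos,
    strictAntiOn_of_deriv_neg (convex_Ioc 0 z₀) (hcont.mono Ioc_subset_Ioi_self) ?_,
    strictMonoOn_of_deriv_pos (convex_Ici z₀) (hcont.mono (Ici_subset_Ioi.2 hz₀pos)) ?_⟩
  · simpa only [interior_Ioc] using hderiv_neg
  · simpa only [interior_Ici] using hderiv_pos

end MZRL

/-- For `q ∈ (0, 0.1]` and `L̄(z) = qz/(1-(1-q)^{2^z-1})` on `[1,∞)`, there is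
`z₀ > -log₂(-ln(1-q))` with `L̄' < 0` on `[1,z₀)`, `L̄'(z₀) = 0`, `L̄' > 0` on
`(z₀,∞)`; so `L̄` strictly decreases on `[1,z₀]`, strictly increases on
`[z₀,∞)`, and attains its global minimum on `[1,∞)` exactly at `z₀`. -/
theorem stmt_6 (q : ℝ) (hq : q ∈ Set.Ioc (0:ℝ) 0.1)
    (L : ℝ → ℝ) (hL : ∀ z : ℝ, L z = q * z / (1 - (1 - q) ^ ((2:ℝ) ^ z - 1))) :
    ∃ z₀ : ℝ, -Real.logb 2 (-Real.log (1 - q)) < z₀ ∧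
      (∀ z ∈ Set.Ico (1:ℝ) z₀, deriv L z < 0) ∧
      deriv L z₀ = 0 ∧
      (∀ z ∈ Set.Ioi z₀, 0 < deriv L z) ∧
      StrictAntiOn L (Set.Icc 1 z₀) ∧
      StrictMonoOn L (Set.Ici z₀) ∧
      (∀ z ∈ Set.Ici (1:ℝ), L z₀ ≤ L z) ∧
      (∀ z ∈ Set.Ici (1:ℝ), z ≠ z₀ → L z₀ < L z) := by
  obtain ⟨hq0, hq1⟩ := hq
  norm_num at hq1
  have hq' : 0 < 1 - q := by linarith
  have ha : 0 < -log (1 - q) := neg_pos.2 (log_neg hq' (by linarith))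
  have ha1 : -log (1 - q) < 1 := by
    have := one_sub_inv_le_log_of_pos hq'
    have : (1 - q)⁻¹ < 2 := by rw [inv_lt_comm₀ hq' two_pos]; linarith
    linarith
  have hL' : L = MZRL.codelength q (-log (1 - q)) := funext fun z => by
    rw [hL, MZRL.codelength, MZRL.missProb, rpow_def_of_pos hq']
    ring_nf
  subst hL'
  obtain ⟨z₀, hz₀, hneg, hzero, hpos, hanti, hmono⟩ :=
    MZRL.exists_deriv_codelength_sign_change hq0 ha ha1
  have hanti' := hanti.mono fun z (hz : z ∈ Icc 1 z₀) => ⟨zero_lt_one.trans_le hz.1, hz.2⟩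
  have hmin := fun z (hz : z ∈ Ici (1 : ℝ)) =>
    lt_of_strictAntiOn_Icc_of_strictMonoOn_Ici hanti' hmono hz
  refine ⟨z₀, hz₀, fun z hz => hneg z ⟨zero_lt_one.trans_le hz.1, hz.2⟩, hzero, hpos, hanti',
    hmono, fun z hz => ?_, hmin⟩
  rcases eq_or_ne z z₀ with rfl | hne
  · exact le_rfl
  · exact (hmin z hz hne).le
end

section
/- Let q ∈ [10⁻¹⁵, 0.1], define L̄(z) = q·z / (1 - (1-q)^{2^z - 1}) for real z ≥ 1, and let z₀ be the unique point in (-log₂(-ln(1-q)), ∞) at which L̄ attains its global minimum on [1, ∞). Then -log₂(-ln(1-q)) < z₀ < -log₂(-ln(1-q)) + 3. -/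
set_option maxHeartbeats 1000000


/-- For `q ∈ [10⁻¹⁵, 0.1]`, the unique point `z₀ ∈ (-log₂(-ln(1-q)), ∞)`
at which `L̄(z) = qz/(1-(1-q)^{2^z-1})` attains its global minimum on `[1,∞)`
satisfies `-log₂(-ln(1-q)) < z₀ < -log₂(-ln(1-q)) + 3`. -/
theorem stmt_8 (q : ℝ) (hq : q ∈ Set.Icc (1e-15 : ℝ) 0.1)
    (L : ℝ → ℝ) (hL : ∀ z : ℝ, L z = q * z / (1 - (1 - q) ^ ((2:ℝ) ^ z - 1)))
    (z₀ : ℝ) (hz₀ : -Real.logb 2 (-Real.log (1 - q)) < z₀)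
    (hmin : ∀ z ∈ Set.Ici (1:ℝ), L z₀ ≤ L z)
    (huniq : ∀ w : ℝ, -Real.logb 2 (-Real.log (1 - q)) < w →
      (∀ z ∈ Set.Ici (1:ℝ), L w ≤ L z) → w = z₀) :
    -Real.logb 2 (-Real.log (1 - q)) < z₀ ∧
      z₀ < -Real.logb 2 (-Real.log (1 - q)) + 3 := by
  obtain ⟨hq1, hq2⟩ := hq
  have h1q : (0:ℝ) < 1 - q := by linarith
  set a : ℝ := -Real.log (1 - q) with ha_def
  have hloga : Real.log (1 - q) = -a := by simp [ha_def]
  have haq : q ≤ a := by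
    have h := Real.log_le_sub_one_of_pos h1q
    simp only [ha_def]; linarith
  have ha0 : (0:ℝ) < a := lt_of_lt_of_le (by norm_num : (0:ℝ) < 1e-15) (le_trans hq1 haq)
  have ha15 : (1e-15 : ℝ) ≤ a := le_trans hq1 haq
  have ha9 : a ≤ 1/9 := by
    have h2 : Real.log (1-q)⁻¹ ≤ (1-q)⁻¹ - 1 :=
      Real.log_le_sub_one_of_pos (by positivity)
    rw [Real.log_inv, hloga] at h2
    have h3 : (1-q)⁻¹ ≤ (9/10:ℝ)⁻¹ := by
      exact inv_anti₀ (by norm_num) (by linarith)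
    norm_num at h3
    linarith
  set c : ℝ := -Real.logb 2 a with hc_def
  have hc0 : 0 < c := by
    have h : Real.logb 2 a < 0 := Real.logb_neg (by norm_num) ha0 (by linarith)
    simp only [hc_def]; linarith
  have hc50 : c < 50 := by
    have h1 : (2:ℝ) ^ (-50 : ℝ) < a := by
      have : (2:ℝ) ^ (-50 : ℝ) = ((2:ℝ)^(50:ℕ))⁻¹ := by
        rw [Real.rpow_neg (by norm_num), ← Real.rpow_natCast 2 50]
        norm_num
      rw [this]
      calc ((2:ℝ)^(50:ℕ))⁻¹ < 1e-15 := by norm_num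
        _ ≤ a := ha15
    have := (Real.lt_logb_iff_rpow_lt (by norm_num) ha0).mpr h1
    simp [hc_def]; linarith
  -- 2^c = a⁻¹
  have h2c : (2:ℝ) ^ c = a⁻¹ := by
    rw [hc_def, Real.rpow_neg (by norm_num), Real.rpow_logb (by norm_num) (by norm_num) ha0]
  -- rewrite L in exp form
  have hrw : ∀ z : ℝ, L z = q * z / (1 - Real.exp (-(a * ((2:ℝ)^z - 1)))) := by
    intro z
    rw [hL z, Real.rpow_def_of_pos h1q, hloga]
    ring_nf
  -- exponent at c + t
  have hexp : ∀ t : ℝ, a * ((2:ℝ)^(c + t) - 1) = (2:ℝ)^t - a := by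
    intro t
    rw [Real.rpow_add (by norm_num), h2c]
    field_simp
  -- 2^(2.5) ≥ 5.52
  have h225 : (5.65:ℝ) ≤ (2:ℝ) ^ (2.5:ℝ) := by
    have h1 : (2:ℝ) ^ (2.5:ℝ) = ((2:ℝ) ^ (5:ℕ) : ℝ) ^ ((1:ℝ)/2) := by
      rw [← Real.rpow_natCast (2:ℝ) 5, ← Real.rpow_mul (by norm_num)]
      norm_num
    have h2 : ((2:ℝ) ^ (5:ℕ) : ℝ) = 32 := by norm_num
    rw [h1, h2, ← Real.sqrt_eq_rpow]
    have h3 : (5.65:ℝ) = Real.sqrt (5.65^2) := by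
      rw [Real.sqrt_sq (by norm_num)]
    rw [h3]
    exact Real.sqrt_le_sqrt (by norm_num)
  -- exp 5.5 ≥ 200
  have hexp55 : (200:ℝ) ≤ Real.exp 5.5 := by
    have h5 : Real.exp 5 = Real.exp 1 ^ (5:ℕ) := by
      rw [← Real.exp_nat_mul]; norm_num
    have he1 : (2.7182818283:ℝ) < Real.exp 1 := Real.exp_one_gt_d9
    have h5b : (148:ℝ) ≤ Real.exp 5 := by
      rw [h5]
      have := pow_le_pow_left₀ (by norm_num : (0:ℝ) ≤ 2.7182818283) he1.le 5
      nlinarith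
    have hhalf : (1.5:ℝ) ≤ Real.exp 0.5 := by
      have := Real.add_one_le_exp (0.5:ℝ); linarith
    have : Real.exp 5.5 = Real.exp 5 * Real.exp 0.5 := by
      rw [← Real.exp_add]; norm_num
    rw [this]
    nlinarith [Real.exp_pos 5]
  -- main upper bound by contradiction
  refine ⟨hz₀, ?_⟩
  by_contra hcon
  push_neg at hcon
  -- hcon : c + 3 ≤ z₀  (after folding)
  have hcon' : c + 3 ≤ z₀ := hcon
  -- Step 1 : L z₀ > q * (c + 3)
  have hz0pos : 0 < z₀ := by linarith
  have hEz : 1 ≤ a * ((2:ℝ)^z₀ - 1) := by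
    have h1 : (2:ℝ)^(c+3) ≤ (2:ℝ)^z₀ :=
      Real.rpow_le_rpow_left_iff (by norm_num) |>.mpr hcon'
    have h2 : a * ((2:ℝ)^(c+3) - 1) = (2:ℝ)^(3:ℝ) - a := hexp 3
    have h3 : (2:ℝ)^(3:ℝ) = 8 := by
      rw [show (3:ℝ) = ((3:ℕ):ℝ) by norm_num, Real.rpow_natCast]; norm_num
    nlinarith
  have hD1 : Real.exp (-(a * ((2:ℝ)^z₀ - 1))) < 1 := by
    rw [Real.exp_lt_one_iff]; linarith
  have hD0 : 0 < 1 - Real.exp (-(a * ((2:ℝ)^z₀ - 1))) := by linarith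
  have hstep1 : q * (c + 3) < L z₀ := by
    rw [hrw z₀]
    have hq0 : 0 < q := by linarith
    have h1 : q * (c+3) ≤ q * z₀ := by nlinarith
    have h2 : q * z₀ < q * z₀ / (1 - Real.exp (-(a * ((2:ℝ)^z₀ - 1)))) := by
      rw [lt_div_iff₀ hD0]
      nlinarith [Real.exp_pos (-(a * ((2:ℝ)^z₀ - 1))),
        mul_pos (mul_pos hq0 hz0pos) (Real.exp_pos (-(a * ((2:ℝ)^z₀ - 1))))]
    exact lt_of_le_of_lt h1 h2
  -- Step 2 : L (c + 2.5) < q * (c + 3)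
  have hw1 : (1:ℝ) ≤ c + 2.5 := by linarith
  have hEw : a * ((2:ℝ)^(c + 2.5) - 1) = (2:ℝ)^(2.5:ℝ) - a := hexp 2.5
  have hEw55 : (5.5:ℝ) ≤ a * ((2:ℝ)^(c + 2.5) - 1) := by
    rw [hEw]; linarith
  have hDw : Real.exp (-(a * ((2:ℝ)^(c+2.5) - 1))) ≤ 0.005 := by
    have h1 : Real.exp (-(a * ((2:ℝ)^(c+2.5) - 1))) ≤ Real.exp (-(5.5:ℝ)) :=
      Real.exp_le_exp.mpr (by linarith)
    have h2 : Real.exp (-(5.5:ℝ)) ≤ 0.005 := by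
      rw [Real.exp_neg]
      rw [inv_le_comm₀ (Real.exp_pos _) (by norm_num)]
      calc (0.005:ℝ)⁻¹ = 200 := by norm_num
        _ ≤ Real.exp 5.5 := hexp55
    linarith
  have hstep2 : L (c + 2.5) < q * (c + 3) := by
    rw [hrw (c + 2.5)]
    have hq0 : 0 < q := by linarith
    have hD0' : (0.995:ℝ) ≤ 1 - Real.exp (-(a * ((2:ℝ)^(c+2.5) - 1))) := by linarith
    rw [div_lt_iff₀ (by linarith)]
    have key : q * (c + 2.5) < q * (c+3) * 0.995 := by nlinarith
    have key2 : q * (c+3) * 0.995 ≤ q * (c+3) * (1 - Real.exp (-(a * ((2:ℝ)^(c+2.5) - 1)))) :=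
      mul_le_mul_of_nonneg_left (by linarith) (by positivity)
    linarith
  have hle := hmin (c + 2.5) hw1
  exact absurd (lt_of_le_of_lt hle (lt_trans hstep2 hstep1)) (lt_irrefl _)
end

section
/- Define A(q) = -1 - 24·ln 2 + e⁸·(1-q) + 8·ln(-ln(1-q)). Then A(q) > 0 for every q ∈ [10⁻¹⁵, 0.1]. -/
/-- `A(q) = -1 - 24 ln 2 + e⁸(1-q) + 8 ln(-ln(1-q)) > 0` for every
`q ∈ [10⁻¹⁵, 0.1]`. -/
theorem stmt_9 (q : ℝ) (hq : q ∈ Set.Icc (1e-15 : ℝ) 0.1) :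
    0 < -1 - 24 * Real.log 2 + Real.exp 8 * (1 - q) +
      8 * Real.log (-Real.log (1 - q)) := by
  obtain ⟨hlo, hhi⟩ := hq
  have hqpos : (0:ℝ) < q := lt_of_lt_of_le (by norm_num) hlo
  have h1q : (0:ℝ) < 1 - q := by linarith
  -- log(1-q) ≤ -q
  have h1 : Real.log (1 - q) ≤ -q := by
    have := Real.log_le_sub_one_of_pos h1q
    linarith
  have hql : q ≤ -Real.log (1 - q) := by linarith
  -- 8 ln(-ln(1-q)) ≥ 8 ln q
  have h2 : Real.log q ≤ Real.log (-Real.log (1 - q)) :=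
    Real.log_le_log hqpos hql
  -- ln q ≥ -35
  have he1 : (2.7:ℝ) < Real.exp 1 := by
    have := Real.exp_one_gt_d9; linarith
  have hexp35 : (1e15:ℝ) ≤ Real.exp 35 := by
    have h : Real.exp 35 = (Real.exp 1) ^ (35:ℕ) := by
      rw [← Real.exp_nat_mul]; norm_num
    have hp : (2.7:ℝ) ^ (35:ℕ) ≤ (Real.exp 1) ^ (35:ℕ) :=
      pow_le_pow_left₀ (by norm_num) he1.le 35
    have : (1e15:ℝ) ≤ (2.7:ℝ) ^ (35:ℕ) := by norm_num
    linarith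
  have h3 : (-35:ℝ) ≤ Real.log q := by
    rw [Real.le_log_iff_exp_le hqpos]
    have : Real.exp (-35) = 1 / Real.exp 35 := by
      rw [Real.exp_neg]; ring
    rw [this]
    have h35pos : (0:ℝ) < Real.exp 35 := Real.exp_pos _
    rw [div_le_iff₀ h35pos]
    nlinarith
  -- e^8 ≥ 2.7^8
  have hexp8 : (2.7:ℝ) ^ (8:ℕ) ≤ Real.exp 8 := by
    have h : Real.exp 8 = (Real.exp 1) ^ (8:ℕ) := by
      rw [← Real.exp_nat_mul]; norm_num
    have hp : (2.7:ℝ) ^ (8:ℕ) ≤ (Real.exp 1) ^ (8:ℕ) :=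
      pow_le_pow_left₀ (by norm_num) he1.le 8
    linarith
  have hlog2 : Real.log 2 < 0.6931471808 := Real.log_two_lt_d9
  have h27 : (2824:ℝ) ≤ (2.7:ℝ)^(8:ℕ) := by norm_num
  have hprod : (2824:ℝ) * 0.9 ≤ Real.exp 8 * (1 - q) := by
    have h9 : (0.9:ℝ) ≤ 1 - q := by linarith
    have : (2824:ℝ) ≤ Real.exp 8 := by linarith
    exact mul_le_mul this h9 (by norm_num) (Real.exp_pos 8).le
  linarith
end

section
/- Let q ∈ [10⁻¹⁵, 0.1] and define L̄(z) = q·z / (1 - (1-q)^{2^z - 1}). Then the derivative of L̄ at the point z = -log₂(-ln(1-q)) + 3 is strictly positive. -/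
/-!
Write `u = -ln(1-q)` and `z₀ = -log₂ u + 3`. Then `2^z₀ = 8/u`, so the exponent `(2^z₀ - 1) ln(1-q)`
collapses to `u - 8` and `(1-q)^(2^z₀-1) = E := e⁻⁸/(1-q)`; the quotient rule then gives
`L̄'(z₀) = q (1 - E - 8 ln 2 · E z₀) / (1 - E)²`. Since `u ≥ q ≥ 10⁻¹⁵ > 2⁻⁵⁰`, `z₀ ≤ 53`, and
`E < 1/900` because `q ≤ 0.1`; hence `8 ln 2 · E z₀ < 300 E` and the numerator is positive.
-/

open Real

theorem hasDerivAt_mul_div_one_sub_rpow_rpow_sub_one {b p : ℝ} (hb : 0 < b) (hp : 0 < p)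
    (c z : ℝ) (hz : p ^ (b ^ z - 1) ≠ 1) :
    HasDerivAt (fun z => c * z / (1 - p ^ (b ^ z - 1)))
      ((c * (1 - p ^ (b ^ z - 1)) + c * z * (log p * (log b * b ^ z) * p ^ (b ^ z - 1))) /
        (1 - p ^ (b ^ z - 1)) ^ 2) z := by
  have hexp : HasDerivAt (fun z => b ^ z - 1) (log b * b ^ z) z := by
    simpa using ((hasDerivAt_id z).const_rpow hb).sub_const 1
  refine (((hasDerivAt_id' z).const_mul c).div ((hexp.const_rpow hp).const_sub 1)
    (sub_ne_zero.2 hz.symm)).congr_deriv ?_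
  ring

theorem Real.rpow_neg_logb_add {b u : ℝ} (hb : 0 < b) (hb1 : b ≠ 1) (hu : 0 < u) (c : ℝ) :
    b ^ (-logb b u + c) = b ^ c / u := by
  rw [rpow_add hb, rpow_neg hb.le, rpow_logb hb hb1 hu, inv_mul_eq_div]

theorem Real.rpow_div_neg_log_sub_one {p : ℝ} (hp0 : 0 < p) (hp1 : p ≠ 1) (c : ℝ) :
    p ^ (c / -log p - 1) = exp (-c) / p := by
  have hlog : log p ≠ 0 := log_ne_zero_of_pos_of_ne_one hp0 hp1
  rw [rpow_def_of_pos hp0, mul_sub, mul_one, exp_sub, exp_log hp0]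
  congr 2
  field_simp

theorem Real.le_neg_log_one_sub {q : ℝ} (hq : q < 1) : q ≤ -log (1 - q) := by
  linarith [log_le_sub_one_of_pos (sub_pos.2 hq)]

theorem Real.exp_neg_eight_lt : exp (-8) < 1 / 1000 := by
  have h8 : exp 8 = exp 1 ^ 8 := by rw [← exp_nat_mul]; norm_num
  rw [exp_neg, inv_lt_comm₀ (exp_pos 8) (by norm_num), h8]
  calc (1 / 1000 : ℝ)⁻¹ < 2.7 ^ 8 := by norm_num
    _ ≤ exp 1 ^ 8 := pow_le_pow_left₀ (by norm_num) (by linarith [exp_one_gt_d9]) 8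

noncomputable def mzrlCodelength (q z : ℝ) : ℝ := q * z / (1 - (1 - q) ^ ((2:ℝ) ^ z - 1))

theorem hasDerivAt_mzrlCodelength {q : ℝ} (hq0 : 0 < q) (hq : q < 1 - exp (-8)) :
    HasDerivAt (mzrlCodelength q)
      (q * (1 - exp (-8) / (1 - q) - 8 * log 2 * (exp (-8) / (1 - q)) *
          (-logb 2 (-log (1 - q)) + 3)) / (1 - exp (-8) / (1 - q)) ^ 2)
      (-logb 2 (-log (1 - q)) + 3) := by
  unfold mzrlCodelength
  set p := 1 - q
  have hp0 : 0 < p := (exp_pos _).trans (by linarith)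
  have hp1 : p < 1 := by linarith
  have hu : 0 < -log p := neg_pos.2 (log_neg hp0 hp1)
  have h2 : (2:ℝ) ^ (-logb 2 (-log p) + 3) = 8 / -log p := by
    rw [rpow_neg_logb_add two_pos (by norm_num) hu]; norm_num
  have hE : p ^ ((2:ℝ) ^ (-logb 2 (-log p) + 3) - 1) = exp (-8) / p := by
    rw [h2, rpow_div_neg_log_sub_one hp0 hp1.ne]
  have hE1 : exp (-8) / p ≠ 1 := by
    rw [ne_eq, div_eq_one_iff_eq hp0.ne']; linarith
  refine (hasDerivAt_mul_div_one_sub_rpow_rpow_sub_one two_pos hp0 q _ (hE ▸ hE1)).congr_deriv ?_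
  rw [hE, h2]
  have hlog : log p ≠ 0 := (neg_pos.1 hu).ne
  field_simp
  ring

/-- For `q ∈ [10⁻¹⁵, 0.1]`, the derivative of
`L̄(z) = qz/(1-(1-q)^{2^z-1})` at `z = -log₂(-ln(1-q)) + 3` is strictly
positive. -/
theorem stmt_11 (q : ℝ) (hq : q ∈ Set.Icc (1e-15 : ℝ) 0.1) :
    0 < deriv (fun z : ℝ => q * z / (1 - (1 - q) ^ ((2:ℝ) ^ z - 1)))
      (-Real.logb 2 (-Real.log (1 - q)) + 3) := by
  obtain ⟨hq₁, hq₂⟩ := hq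
  have hE : exp (-8) / (1 - q) < 1 / 900 := by
    rw [div_lt_iff₀ (by linarith)]; linarith [exp_neg_eight_lt]
  have hu : (2:ℝ) ^ (-50 : ℝ) ≤ -log (1 - q) :=
    calc (2:ℝ) ^ (-50 : ℝ) ≤ 1e-15 := by rw [rpow_neg two_pos.le]; norm_num
      _ ≤ -log (1 - q) := hq₁.trans (le_neg_log_one_sub (by linarith))
  have hz : -logb 2 (-log (1 - q)) + 3 ≤ 53 := by
    linarith [(le_logb_iff_rpow_le one_lt_two ((rpow_pos_of_pos two_pos _).trans_le hu)).2 hu]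
  change 0 < deriv (mzrlCodelength q) _
  rw [(hasDerivAt_mzrlCodelength (by linarith) (by linarith [exp_neg_eight_lt])).deriv]
  have hE0 : 0 < exp (-8) / (1 - q) := div_pos (exp_pos _) (by linarith)
  refine div_pos (mul_pos (by linarith) ?_) (pow_pos (by linarith) 2)
  have hslope : 8 * log 2 * (exp (-8) / (1 - q)) * (-logb 2 (-log (1 - q)) + 3)
      ≤ 8 * log 2 * (exp (-8) / (1 - q)) * 53 :=
    mul_le_mul_of_nonneg_left hz (by positivity)
  nlinarith [log_two_lt_d9]
end

section
/- Let p ∈ [0.9, 1), define r(z) = p - p^{2^z} + z·2^z·p^{2^z}·ln 2·ln p, and set z_m = -log₂(-ln p). Then r(z_m) = (-1 + e·p + ln(-ln p))/e, and r(z_m) < 0. -/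
/-!
Put `t = -ln p`. At `z_m = -log₂ t` one has `2^{z_m} = 1/t`, hence `p^{2^{z_m}} = e^{ln p / t} = e⁻¹`,
and substituting gives the closed form. For its sign: `t ≤ 1/p - 1 ≤ 1/9`, so
`ln t ≤ -2 ln 3 < -2 < 1 - e < 1 - e p`.
-/

open Real

/-- The function `r` of the paper, whose sign is that of the derivative of the expected codelength. -/
noncomputable def codelengthAux (p z : ℝ) : ℝ :=
  p - p ^ ((2:ℝ) ^ z) + z * (2:ℝ) ^ z * p ^ ((2:ℝ) ^ z) * log 2 * log p

lemma rpow_inv_neg_log {p : ℝ} (hp0 : 0 < p) (hp1 : p ≠ 1) : p ^ (-log p)⁻¹ = exp (-1) := by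
  have hlog : log p ≠ 0 := log_ne_zero_of_pos_of_ne_one hp0 hp1
  rw [rpow_def_of_pos hp0]
  congr 1
  field_simp

lemma rpow_neg_logb_self {b t : ℝ} (hb0 : 0 < b) (hb1 : b ≠ 1) (ht : 0 < t) :
    b ^ (-logb b t) = t⁻¹ := by
  rw [← logb_inv, rpow_logb hb0 hb1 (inv_pos.2 ht)]

lemma codelengthAux_neg_logb_neg_log {p : ℝ} (hp0 : 0 < p) (hp1 : p < 1) :
    codelengthAux p (-logb 2 (-log p)) = (-1 + exp 1 * p + log (-log p)) / exp 1 := by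
  have hlog : log p < 0 := log_neg hp0 hp1
  have hlog_ne : log p ≠ 0 := hlog.ne
  have hlog2 : log 2 ≠ 0 := by positivity
  rw [codelengthAux, rpow_neg_logb_self two_pos (by norm_num) (neg_pos.2 hlog),
    rpow_inv_neg_log hp0 hp1.ne, exp_neg, logb]
  field_simp
  ring

lemma neg_log_le_one_ninth {p : ℝ} (hp : 0.9 ≤ p) : -log p ≤ 1 / 9 := by
  have hp0 : 0 < p := by linarith
  calc -log p = log p⁻¹ := (log_inv p).symm
    _ ≤ p⁻¹ - 1 := log_le_sub_one_of_pos (inv_pos.2 hp0)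
    _ ≤ 1 / 9 := by
      rw [sub_le_iff_le_add, inv_le_comm₀ hp0 (by norm_num)]
      linarith

lemma neg_one_add_exp_mul_add_log_neg_log_neg {p : ℝ} (hp : p ∈ Set.Ico (0.9:ℝ) 1) :
    -1 + exp 1 * p + log (-log p) < 0 := by
  obtain ⟨hp0, hp1⟩ := hp
  have ht : 0 < -log p := neg_pos.2 (log_neg (by linarith) hp1)
  have hlog_t : log (-log p) ≤ -2 * log 3 :=
    calc log (-log p) ≤ log (1 / 9) := log_le_log ht (neg_log_le_one_ninth hp0)
      _ = -2 * log 3 := by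
        rw [one_div, log_inv, show (9:ℝ) = 3 ^ 2 by norm_num, log_pow]
        push_cast
        ring
  have hep : exp 1 * p < 3 := by nlinarith [exp_one_lt_d9, exp_pos 1]
  linarith [log_three_gt_d9]

/-- For `p ∈ [0.9,1)`, `r(z) = p - p^{2^z} + z 2^z p^{2^z} ln 2 ln p` and
`z_m = -log₂(-ln p)`: `r(z_m) = (-1 + e p + ln(-ln p))/e` and `r(z_m) < 0`. -/
theorem stmt_14 (p : ℝ) (hp : p ∈ Set.Ico (0.9:ℝ) 1)
    (r : ℝ → ℝ)
    (hr : ∀ z : ℝ, r z = p - p ^ ((2:ℝ) ^ z) +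
      z * (2:ℝ) ^ z * p ^ ((2:ℝ) ^ z) * Real.log 2 * Real.log p) :
    r (-Real.logb 2 (-Real.log p)) =
      (-1 + Real.exp 1 * p + Real.log (-Real.log p)) / Real.exp 1 ∧
    r (-Real.logb 2 (-Real.log p)) < 0 := by
  obtain rfl : r = codelengthAux p := funext hr
  have hvalue := codelengthAux_neg_logb_neg_log (by linarith [hp.1]) hp.2
  exact ⟨hvalue, hvalue ▸ div_neg_of_neg_of_pos
    (neg_one_add_exp_mul_add_log_neg_log_neg hp) (exp_pos 1)⟩
end

section
/- For every p ∈ [0.9, 1), one has r(1) = p - p² + 2·p²·ln 2·ln p < 0. Moreover the function p ↦ p - p² + 2p²·ln 2·ln p is strictly increasing on [0.9, 1) (its derivative 1 - 2p + 2p·ln 2 + 4p·ln 2·ln p is positive there) and tends to 0 as p → 1. -/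
/-!
The derivative `1 - 2p + 2p ln 2 + 4p ln 2 ln p` is bounded below, via `ln p ≥ 1 - 1/p`, by the
affine function `1 - 4 ln 2 + (6 ln 2 - 2) p`, which is positive for `p ≥ 0.9` because
`ln 2 > 4/7`. So `r(1)` is strictly increasing on `[0.9, ∞)`; as it vanishes at `p = 1`, it is
negative on `[0.9, 1)` and tends to `0` as `p → 1`.
-/

open Real Set Filter Topology

noncomputable section

namespace Codelength

/-- `r(1)` as a function of `p`. -/
def rOne (p : ℝ) : ℝ := p - p ^ 2 + 2 * p ^ 2 * log 2 * log p

def rOneDeriv (p : ℝ) : ℝ := 1 - 2 * p + 2 * p * log 2 + 4 * p * log 2 * log p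

lemma rOne_one : rOne 1 = 0 := by simp [rOne]

lemma hasDerivAt_rOne {p : ℝ} (hp : p ≠ 0) : HasDerivAt rOne (rOneDeriv p) p := by
  have h := ((hasDerivAt_id p).sub (hasDerivAt_pow 2 p)).add
    ((((hasDerivAt_pow 2 p).const_mul 2).mul_const (log 2)).mul (hasDerivAt_log hp))
  refine h.congr_deriv ?_
  simp only [rOneDeriv]
  field_simp
  ring

lemma rOneDeriv_pos {p : ℝ} (hp : 0.9 ≤ p) : 0 < rOneDeriv p := by
  have hp0 : 0 < p := by linarith
  have hlog2 : 4 / 7 < log 2 := by linarith [log_two_gt_d9]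
  have hlog : 4 * log 2 * (p - 1) ≤ 4 * p * log 2 * log p :=
    calc 4 * log 2 * (p - 1) = 4 * p * log 2 * (1 - p⁻¹) := by field_simp
      _ ≤ 4 * p * log 2 * log p := by
        gcongr
        exact one_sub_inv_le_log_of_pos hp0
  have haffine : 0 < 1 - 4 * log 2 + (6 * log 2 - 2) * p := by
    nlinarith [mul_le_mul_of_nonneg_left hp (show 0 ≤ 6 * log 2 - 2 by linarith)]
  unfold rOneDeriv
  linarith

lemma strictMonoOn_rOne : StrictMonoOn rOne (Ici 0.9) := by
  have hderiv : ∀ p ∈ Ici (0.9 : ℝ), HasDerivAt rOne (rOneDeriv p) p := fun p hp =>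
    hasDerivAt_rOne (by linarith [mem_Ici.mp hp])
  refine strictMonoOn_of_hasDerivWithinAt_pos (f' := rOneDeriv) (convex_Ici _)
    (fun p hp => (hderiv p hp).continuousAt.continuousWithinAt) (fun p hp => ?_) (fun p hp => ?_)
  · rw [interior_Ici] at hp ⊢
    exact (hderiv p (mem_Ici.mpr (le_of_lt hp))).hasDerivWithinAt
  · rw [interior_Ici] at hp
    exact rOneDeriv_pos (le_of_lt hp)

lemma rOne_neg {p : ℝ} (hp : p ∈ Ico (0.9 : ℝ) 1) : rOne p < 0 :=
  rOne_one ▸ strictMonoOn_rOne (mem_Ici.mpr hp.1) (mem_Ici.mpr (by norm_num)) hp.2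

lemma tendsto_rOne_one : Tendsto rOne (𝓝 1) (𝓝 0) :=
  rOne_one ▸ (hasDerivAt_rOne one_ne_zero).continuousAt.tendsto

end Codelength

end

open Codelength in
/-- For every `p ∈ [0.9,1)`: `r(1) = p - p² + 2p² ln 2 ln p < 0`; moreover
`p ↦ p - p² + 2p² ln 2 ln p` is strictly increasing on `[0.9,1)`, its
derivative `1 - 2p + 2p ln 2 + 4p ln 2 ln p` is positive there, and the
function tends to `0` as `p → 1⁻`. -/
theorem stmt_15 :
    (∀ p ∈ Set.Ico (0.9:ℝ) 1,
      p - p ^ 2 + 2 * p ^ 2 * Real.log 2 * Real.log p < 0) ∧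
    StrictMonoOn (fun p : ℝ => p - p ^ 2 + 2 * p ^ 2 * Real.log 2 * Real.log p)
      (Set.Ico 0.9 1) ∧
    (∀ p ∈ Set.Ico (0.9:ℝ) 1,
      HasDerivAt (fun p : ℝ => p - p ^ 2 + 2 * p ^ 2 * Real.log 2 * Real.log p)
        (1 - 2 * p + 2 * p * Real.log 2 + 4 * p * Real.log 2 * Real.log p) p ∧
      0 < 1 - 2 * p + 2 * p * Real.log 2 + 4 * p * Real.log 2 * Real.log p) ∧
    Filter.Tendsto (fun p : ℝ => p - p ^ 2 + 2 * p ^ 2 * Real.log 2 * Real.log p)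
      (nhdsWithin 1 (Set.Iio 1)) (nhds 0) :=
  ⟨fun _ hp => rOne_neg hp,
    strictMonoOn_rOne.mono Set.Ico_subset_Ici_self,
    fun p hp => ⟨hasDerivAt_rOne (by linarith [hp.1]), rOneDeriv_pos hp.1⟩,
    tendsto_rOne_one.mono_left nhdsWithin_le_nhds⟩
end

section
/- Let p ∈ [0.9, 1) and define r(z) = p - p^{2^z} + z·2^z·p^{2^z}·ln 2·ln p for z ≥ 1. Then r(z) tends to p as z → +∞, and there is a unique z₀ ∈ (-log₂(-ln p), ∞) with r(z₀) = 0; moreover r(z) < 0 for all z ∈ [1, z₀) and r(z) > 0 for all z ∈ (z₀, ∞). -/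
/-!
Substituting `t = 2 ^ z` turns `r` into `t ↦ p - p ^ t + t log t · p ^ t log p`, whose
derivative `p ^ t log p · log t · (1 + t log p)` is negative on `(1, t_m)` and positive on
`(t_m, ∞)`, where `t_m = -1 / log p = 2 ^ z_m`. Hence `r` decreases on `[1, z_m]` from
`r 1 < 0` (which holds as soon as `2 p log 2 > 1`) and then increases towards its limit `p > 0`,
crossing zero exactly once.
-/

open Real Filter Set Topology

theorem exists_unique_zero_of_antitoneOn_of_strictMonoOn {f : ℝ → ℝ} {a m l : ℝ}
    (ham : a ≤ m) (hcont : ContinuousOn f (Ici m)) (hanti : AntitoneOn f (Icc a m))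
    (hmono : StrictMonoOn f (Ici m)) (hfa : f a < 0) (hlim : Tendsto f atTop (𝓝 l))
    (hl : 0 < l) :
    ∃ z₀ : ℝ, m < z₀ ∧ f z₀ = 0 ∧ (∀ w : ℝ, m < w → f w = 0 → w = z₀) ∧
      (∀ z : ℝ, a ≤ z → z < z₀ → f z < 0) ∧ (∀ z : ℝ, z₀ < z → 0 < f z) := by
  have hle_a : ∀ z ∈ Icc a m, f z < 0 := fun z hz =>
    (hanti ⟨le_rfl, ham⟩ hz hz.1).trans_lt hfa
  have hfm : f m < 0 := hle_a m ⟨ham, le_rfl⟩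
  obtain ⟨b, hb⟩ := (hlim.eventually (eventually_gt_nhds hl)).exists_forall_of_atTop
  have hM : 0 < f (max b m) := hb _ (le_max_left _ _)
  obtain ⟨z₀, hz₀, hfz₀⟩ := intermediate_value_Icc (le_max_right b m)
    (hcont.mono Icc_subset_Ici_self) ⟨hfm.le, hM.le⟩
  have hmz₀ : m < z₀ := hz₀.1.lt_of_ne fun h => hfm.ne (h ▸ hfz₀)
  refine ⟨z₀, hmz₀, hfz₀, fun w hw hfw => ?_, fun z haz hz => ?_, fun z hz => ?_⟩
  · exact hmono.injOn (mem_Ici.2 hw.le) (mem_Ici.2 hmz₀.le) (hfw.trans hfz₀.symm)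
  · rcases le_or_gt z m with hzm | hzm
    · exact hle_a z ⟨haz, hzm⟩
    · exact hfz₀ ▸ hmono (mem_Ici.2 hzm.le) (mem_Ici.2 hmz₀.le) hz
  · exact hfz₀ ▸ hmono (mem_Ici.2 hmz₀.le) (mem_Ici.2 (hmz₀.trans hz).le) hz

/-- The paper's `r` in the variable `t = 2 ^ z`. -/
noncomputable def signAux (p t : ℝ) : ℝ :=
  p - p ^ t + t * log t * p ^ t * log p

theorem signAux_two_rpow (p z : ℝ) :
    signAux p (2 ^ z) =
      p - p ^ ((2 : ℝ) ^ z) + z * 2 ^ z * p ^ ((2 : ℝ) ^ z) * log 2 * log p := by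
  rw [signAux, log_rpow two_pos]
  ring

section

variable {p : ℝ} (hp0 : 0 < p) (hp1 : p < 1)
include hp0

theorem hasDerivAt_signAux {t : ℝ} (ht : 0 < t) :
    HasDerivAt (signAux p) (p ^ t * log p * log t * (1 + t * log p)) t := by
  have hpow := (hasStrictDerivAt_const_rpow hp0 t).hasDerivAt
  have h : HasDerivAt (fun t => p - p ^ t + t * log t * p ^ t * log p) _ t :=
    ((hasDerivAt_const t p).sub hpow).add
      (((hasDerivAt_mul_log ht.ne').mul hpow).mul_const (log p))
  exact h.congr_deriv (by ring)

theorem continuousOn_signAux : ContinuousOn (signAux p) (Ioi 0) := fun _ ht =>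
  (hasDerivAt_signAux hp0 ht).continuousAt.continuousWithinAt

include hp1

theorem strictAntiOn_signAux : StrictAntiOn (signAux p) (Icc 1 (-(log p)⁻¹)) := by
  have hL : log p < 0 := log_neg hp0 hp1
  refine strictAntiOn_of_hasDerivWithinAt_neg (convex_Icc _ _)
    ((continuousOn_signAux hp0).mono fun t ht => lt_of_lt_of_le one_pos ht.1)
    (fun t ht => (hasDerivAt_signAux hp0 ?_).hasDerivWithinAt) fun t ht => ?_
  all_goals rw [interior_Icc] at ht
  · exact one_pos.trans ht.1
  have hlog : 0 < log t := log_pos ht.1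
  have hfactor : 0 < 1 + t * log p := by
    nlinarith [mul_lt_mul_of_neg_right ht.2 hL, inv_mul_cancel₀ hL.ne]
  have := rpow_pos_of_pos hp0 t
  exact mul_neg_of_neg_of_pos
    (mul_neg_of_neg_of_pos (mul_neg_of_pos_of_neg this hL) hlog) hfactor

theorem strictMonoOn_signAux (hp1e : -1 ≤ log p) :
    StrictMonoOn (signAux p) (Ici (-(log p)⁻¹)) := by
  have hL : log p < 0 := log_neg hp0 hp1
  have htm : 0 < -(log p)⁻¹ := neg_pos.2 (inv_lt_zero.2 hL)
  refine strictMonoOn_of_hasDerivWithinAt_pos (convex_Ici _)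
    ((continuousOn_signAux hp0).mono fun t ht => htm.trans_le ht)
    (fun t ht => (hasDerivAt_signAux hp0 ?_).hasDerivWithinAt) fun t ht => ?_
  all_goals rw [interior_Ici] at ht
  · exact htm.trans ht
  have hfactor : 1 + t * log p < 0 := by
    nlinarith [mul_lt_mul_of_neg_right ht hL, inv_mul_cancel₀ hL.ne]
  have hlog : 0 < log t := log_pos (by nlinarith)
  have := rpow_pos_of_pos hp0 t
  exact mul_pos_of_neg_of_neg
    (mul_neg_of_neg_of_pos (mul_neg_of_pos_of_neg this hL) hlog) hfactor

theorem tendsto_mul_log_mul_rpow_atTop :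
    Tendsto (fun t => t * log t * p ^ t) atTop (𝓝 0) := by
  have hb : 0 < -log p := neg_pos.2 (log_neg hp0 hp1)
  refine squeeze_zero' ?_ ?_ (tendsto_rpow_mul_exp_neg_mul_atTop_nhds_zero 2 _ hb)
  all_goals filter_upwards [eventually_ge_atTop 1] with t ht
  · have := log_nonneg ht
    positivity
  · rw [rpow_def_of_pos hp0, neg_neg, mul_comm (log p), rpow_two, sq]
    have := (log_le_sub_one_of_pos (one_pos.trans_le ht)).trans (sub_le_self t zero_le_one)
    gcongr

theorem tendsto_signAux_atTop : Tendsto (signAux p) atTop (𝓝 p) := by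
  have h := ((tendsto_const_nhds (x := p)).sub
    (tendsto_rpow_atTop_of_base_lt_one p (by linarith) hp1)).add
      ((tendsto_mul_log_mul_rpow_atTop hp0 hp1).mul_const (log p))
  rw [sub_zero, zero_mul, add_zero] at h
  exact h

theorem signAux_two_neg (h2 : 1 < 2 * p * log 2) : signAux p 2 < 0 := by
  have hlog : log p ≤ p - 1 := log_le_sub_one_of_pos hp0
  rw [signAux, rpow_two]
  nlinarith [mul_pos hp0 (sub_pos.2 hp1),
    mul_le_mul_of_nonneg_left hlog (by positivity : 0 ≤ 2 * p ^ 2 * log 2)]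

end

/-- For `p ∈ [0.9,1)` and `r(z) = p - p^{2^z} + z 2^z p^{2^z} ln 2 ln p`:
`r(z) → p` as `z → +∞`, and there is a unique `z₀ ∈ (-log₂(-ln p), ∞)` with
`r(z₀) = 0`; moreover `r(z) < 0` for all `z ∈ [1, z₀)` and `r(z) > 0` for all
`z ∈ (z₀, ∞)`. -/
theorem stmt_16 (p : ℝ) (hp : p ∈ Set.Ico (0.9:ℝ) 1)
    (r : ℝ → ℝ)
    (hr : ∀ z : ℝ, r z = p - p ^ ((2:ℝ) ^ z) +
      z * (2:ℝ) ^ z * p ^ ((2:ℝ) ^ z) * Real.log 2 * Real.log p) :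
    Filter.Tendsto r Filter.atTop (nhds p) ∧
    ∃ z₀ : ℝ, -Real.logb 2 (-Real.log p) < z₀ ∧ r z₀ = 0 ∧
      (∀ w : ℝ, -Real.logb 2 (-Real.log p) < w → r w = 0 → w = z₀) ∧
      (∀ z : ℝ, 1 ≤ z → z < z₀ → r z < 0) ∧
      (∀ z : ℝ, z₀ < z → 0 < r z) := by
  obtain ⟨hp9, hp1⟩ := hp
  have hp0 : 0 < p := by linarith
  have hL : log p < 0 := log_neg hp0 hp1
  have hL9 : -(1 / 9) ≤ log p := by
    have hinv : p⁻¹ ≤ (0.9)⁻¹ := inv_anti₀ (by norm_num) hp9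
    norm_num at hinv
    linarith [one_sub_inv_le_log_of_pos hp0]
  have hcont : Continuous r := by
    rw [show r = _ from funext hr]
    fun_prop (disch := positivity)
  obtain rfl : r = fun z => signAux p (2 ^ z) :=
    funext fun z => (hr z).trans (signAux_two_rpow p z).symm
  have hexp := strictMono_rpow_of_base_gt_one one_lt_two
  have hzm : (2 : ℝ) ^ (-logb 2 (-log p)) = -(log p)⁻¹ := by
    rw [rpow_neg zero_le_two, rpow_logb two_pos (by norm_num) (neg_pos.2 hL), inv_neg]
  have h1zm : 1 ≤ -logb 2 (-log p) := by
    rw [← rpow_le_rpow_left_iff one_lt_two, rpow_one, hzm]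
    nlinarith [inv_mul_cancel₀ hL.ne]
  have hanti : StrictAntiOn (fun z => signAux p (2 ^ z)) (Icc 1 (-logb 2 (-log p))) :=
    (strictAntiOn_signAux hp0 hp1).comp_strictMonoOn (hexp.strictMonoOn _)
    fun z hz => ⟨one_le_rpow one_le_two (by linarith [hz.1]), hzm ▸ hexp.monotone hz.2⟩
  have hmono : StrictMonoOn (fun z => signAux p (2 ^ z)) (Ici (-logb 2 (-log p))) :=
    (strictMonoOn_signAux hp0 hp1 (by linarith)).comp (hexp.strictMonoOn _)
    fun z hz => by rw [mem_Ici, ← hzm]; exact hexp.monotone hz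
  have hr1 : signAux p (2 ^ (1 : ℝ)) < 0 := by
    rw [rpow_one]
    exact signAux_two_neg hp0 hp1 (by nlinarith [log_two_gt_d9])
  have hlim :=
    (tendsto_signAux_atTop hp0 hp1).comp (tendsto_rpow_atTop_of_base_gt_one 2 one_lt_two)
  exact ⟨hlim, exists_unique_zero_of_antitoneOn_of_strictMonoOn h1zm hcont.continuousOn
    hanti.antitoneOn hmono hr1 hlim hp0⟩
end

section
/- Let q ∈ [10⁻¹⁵, 0.1], define L̄(n) = q·⌈log₂ n⌉ / (1 - (1-q)^{n-1}) for integers n ≥ 2, and let k_opt be a positive integer minimizing k ↦ q·k / (1 - (1-q)^{2^k - 1}) over positive integers. Let n_max ≥ 2 be an integer. If n_max ≥ 2^{k_opt}, then the minimum of L̄(n) over integers n with 2 ≤ n ≤ n_max is attained at n = 2^{k_opt}. If n_max < 2^{k_opt}, then this minimum is attained at n = 2^{⌊log₂ n_max⌋} or at n = n_max. -/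
set_option maxHeartbeats 1000000

noncomputable def LfX (q : ℝ) (k : ℕ) : ℝ := q * k / (1 - (1 - q) ^ (2 ^ k - 1))

lemma aux_pow_bound (r : ℝ) (hr0 : 0 ≤ r) (hr1 : r ≤ 1) (M : ℕ) :
    r ^ M * (((M : ℝ) + 1) - (M : ℝ) * r) ≤ 1 := by
  induction M with
  | zero => simp
  | succ M ih =>
    have h2 : (0:ℝ) ≤ r ^ M := pow_nonneg hr0 M
    have h1 : r * (((M:ℝ) + 1 + 1) - ((M:ℝ)+1) * r) ≤ ((M:ℝ)+1) - (M:ℝ)*r := by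
      nlinarith [sq_nonneg (1 - r)]
    calc r ^ (M+1) * ((((M:ℕ)+1 : ℕ) : ℝ) + 1 - (((M:ℕ)+1 : ℕ) : ℝ) * r)
        = r ^ M * (r * (((M:ℝ) + 1 + 1) - ((M:ℝ)+1) * r)) := by push_cast; ring
      _ ≤ r ^ M * (((M:ℝ)+1) - (M:ℝ)*r) := by nlinarith
      _ ≤ 1 := ih

lemma aux_ratio (r : ℝ) (hr0 : 0 ≤ r) (hr1 : r ≤ 1) (M : ℕ) :
    (M : ℝ) * (1 - r ^ (M+1)) ≤ ((M : ℝ) + 1) * (1 - r ^ M) := by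
  have h := aux_pow_bound r hr0 hr1 M
  have hs : r ^ (M+1) = r ^ M * r := pow_succ r M
  nlinarith [h]

lemma aux_fourk (k : ℕ) (hk : 2 ≤ k) : 4 * k ≤ 2 ^ (k+1) := by
  induction k with
  | zero => omega
  | succ k ih =>
    rcases Nat.lt_or_ge k 2 with h | h
    · interval_cases k <;> simp_all <;> omega
    · have := ih h
      have h8 : 8 ≤ 2 ^ (k+1) := by
        calc (8:ℕ) = 2 ^ 3 := rfl
          _ ≤ 2 ^ (k+1) := Nat.pow_le_pow_right (by norm_num) (by omega)
      have : 2 ^ (k+1+1) = 2 * 2 ^ (k+1) := by ring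
      omega

/-- key unimodality step in φ form -/
lemma aux_key (r : ℝ) (h9 : 0.9 ≤ r) (h1 : r < 1) (k : ℕ) (hk : 1 ≤ k)
    (H : (k:ℝ) * (r^(2^k-1) * (1 - r^(2^k-1+1))) < 1 - r^(2^k-1)) :
    ((k:ℝ)+1) * (r^(2^(k+1)-1) * (1 - r^(2^(k+1)-1+1))) < 1 - r^(2^(k+1)-1) := by
  have hr0 : (0:ℝ) < r := by linarith
  set m : ℕ := 2^k - 1 with hm
  have hm1 : 1 ≤ m := by
    have : 2 ≤ 2 ^ k := by calc 2 = 2^1 := rfl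
                                _ ≤ 2^k := Nat.pow_le_pow_right (by norm_num) hk
    omega
  have hMeq : 2^(k+1) - 1 = 2*m + 1 := by
    have : 2 ^ (k+1) = 2 * 2^k := by ring
    have h2 : 1 ≤ 2 ^ k := Nat.one_le_two_pow
    omega
  set s : ℝ := r ^ m with hs
  have hs0 : 0 < s := pow_pos hr0 m
  have hs1 : s < 1 := pow_lt_one₀ hr0.le h1 (by omega)
  have hsucc : r ^ (m+1) = s * r := pow_succ r m
  rw [hMeq]
  have h2m : r ^ (2*m+1) = s * (s * r) := by
    rw [show 2*m+1 = m + (m+1) by ring, pow_add, hsucc, hs]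
  have h2m1 : r ^ (2*m+1+1) = (s*r) * (s*r) := by
    rw [show 2*m+1+1 = (m+1) + (m+1) by ring, pow_add, hsucc]
  rw [hsucc] at H
  -- H : k * (s * (1 - s * r)) < 1 - s
  rcases Nat.lt_or_ge k 2 with hk1 | hk2
  · -- k = 1 : contradiction since r ≥ 0.9
    interval_cases k
    · exfalso
      have hm' : m = 1 := by norm_num [hm]
      have hsr : s = r := by rw [hs, hm', pow_one]
      rw [hsr] at H
      norm_num at H
      have hr2 : (0.81:ℝ) ≤ r * r := by nlinarith
      nlinarith [mul_nonneg (by linarith : (0:ℝ) ≤ 1 - r)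
        (by nlinarith : (0:ℝ) ≤ r * r + r - 1)]
  · -- k ≥ 2
    have hks : (k:ℝ) * s < 1 := by
      have h0 : (k:ℝ) * s * (1 - s) ≤ (k:ℝ) * (s * (1 - s * r)) := by
        nlinarith [mul_nonneg (mul_nonneg (mul_nonneg (Nat.cast_nonneg (α := ℝ) k) hs0.le)
          hs0.le) (by linarith : (0:ℝ) ≤ 1 - r)]
      have h1' : (k:ℝ) * s * (1 - s) < 1 * (1 - s) := by nlinarith
      exact lt_of_mul_lt_mul_right h1' (by linarith)
    have hk2' : (2:ℝ) ≤ (k:ℝ) := by exact_mod_cast hk2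
    set M : ℕ := 2*m+1 with hMdef
    set t : ℝ := r ^ M with ht
    have ht0 : 0 < t := pow_pos hr0 M
    have ht1 : t < 1 := pow_lt_one₀ hr0.le h1 (by omega)
    have hteq : t = s * (s * r) := h2m
    have hk2t : (k:ℝ)^2 * t < 1 := by
      nlinarith [mul_nonneg (Nat.cast_nonneg (α := ℝ) k) hs0.le, sq_nonneg ((k:ℝ)*s)]
    have hratio := aux_ratio r hr0.le h1.le M
    have hMb : ((k:ℝ)+1) * ((M:ℝ)+1) ≤ (k:ℝ)^2 * (M:ℝ) := by
      have h4k : (4:ℝ) * (k:ℝ) ≤ (M:ℝ) + 1 := by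
        have := aux_fourk k hk2
        have : 4 * k ≤ M + 1 := by omega
        exact_mod_cast this
      have hpoly : (0:ℝ) ≤ (k:ℝ)^2 - (k:ℝ) - 1 := by nlinarith
      have hT := mul_le_mul_of_nonneg_left h4k hpoly
      have h5 : (0:ℝ) ≤ (k:ℝ) * (4*(k:ℝ)^2 - 5*(k:ℝ) - 4) :=
        mul_nonneg (Nat.cast_nonneg (α := ℝ) k) (by nlinarith [sq_nonneg ((k:ℝ)-2)])
      linarith [hT, h5]
    have hM0 : (0:ℝ) < (M:ℝ) := by
      have : 0 < M := by omega
      exact_mod_cast this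
    have hA := mul_le_mul_of_nonneg_left hratio
      (by positivity : (0:ℝ) ≤ ((k:ℝ)+1) * t)
    have hB := mul_le_mul_of_nonneg_right hMb
      (mul_nonneg ht0.le (by linarith : (0:ℝ) ≤ 1 - t))
    have hC := mul_lt_mul_of_pos_right hk2t
      (mul_pos hM0 (by linarith : (0:ℝ) < 1 - t))
    have final : (M:ℝ) * (((k:ℝ)+1) * (t * (1 - r^(M+1)))) < (M:ℝ) * (1 - t) := by
      linarith [hA, hB, hC]
    exact lt_of_mul_lt_mul_left final hM0.le

lemma aux_den_pos (q : ℝ) (hq0 : 0 < q) (hq1 : q ≤ 0.1) (j : ℕ) (hj : 1 ≤ j) :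
    0 < 1 - (1 - q) ^ j := by
  have : (1 - q) ^ j < 1 := pow_lt_one₀ (by linarith) (by linarith) (by omega)
  linarith

lemma aux_Liff (q : ℝ) (hq0 : 0 < q) (hq1 : q ≤ 0.1) (k : ℕ) (hk : 1 ≤ k) :
    LfX q k < LfX q (k+1) ↔
      (k:ℝ) * ((1-q)^(2^k-1) * (1 - (1-q)^(2^k-1+1))) < 1 - (1-q)^(2^k-1) := by
  set r : ℝ := 1 - q with hr
  have hr0 : 0 < r := by rw [hr]; linarith
  have hr1 : r < 1 := by rw [hr]; linarith
  set m : ℕ := 2^k - 1 with hm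
  have hm1 : 1 ≤ m := by
    have : 2 ≤ 2 ^ k := by calc 2 = 2^1 := rfl
                                _ ≤ 2^k := Nat.pow_le_pow_right (by norm_num) hk
    omega
  have hMeq : 2^(k+1) - 1 = 2*m + 1 := by
    have : 2 ^ (k+1) = 2 * 2^k := by ring
    have h2 : 1 ≤ 2 ^ k := Nat.one_le_two_pow
    omega
  have hd1 : 0 < 1 - r ^ m := aux_den_pos q hq0 hq1 m hm1
  have hd2 : 0 < 1 - r ^ (2*m+1) := aux_den_pos q hq0 hq1 _ (by omega)
  unfold LfX
  rw [← hr, ← hm, hMeq, div_lt_div_iff₀ hd1 hd2]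
  have h2m : r ^ (2*m+1) = r^m * (r^m * r) := by
    rw [show 2*m+1 = m + (m+1) by ring, pow_add, pow_succ]
  have hsucc : r ^ (m+1) = r^m * r := pow_succ r m
  rw [h2m, hsucc]
  push_cast
  rw [show q * (k:ℝ) * (1 - r^m * (r^m*r)) = q * ((k:ℝ) * (1 - r^m * (r^m*r))) by ring,
      show q * ((k:ℝ)+1 : ℝ) * (1 - r^m) = q * (((k:ℝ)+1) * (1 - r^m)) by ring,
      mul_lt_mul_iff_right₀ hq0]
  constructor <;> intro h <;> nlinarith [h]


lemma aux_dec (q : ℝ) (hq0 : 0 < q) (hq1 : q ≤ 0.1)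
    (kopt : ℕ)
    (hkopt : ∀ k : ℕ, 1 ≤ k → LfX q kopt ≤ LfX q k) :
    ∀ a b : ℕ, 1 ≤ a → a ≤ b → b ≤ kopt → LfX q b ≤ LfX q a := by
  have h9 : (0.9:ℝ) ≤ 1 - q := by linarith
  have h1 : (1:ℝ) - q < 1 := by linarith
  have step : ∀ j : ℕ, 1 ≤ j → j < kopt → LfX q (j+1) ≤ LfX q j := by
    intro j hj hjk
    by_contra hcon
    push_neg at hcon
    have chain : ∀ i : ℕ, LfX q (j+i) < LfX q (j+i+1) := by
      intro i
      induction i with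
      | zero => simpa using hcon
      | succ i ih =>
        have h1' := (aux_Liff q hq0 hq1 (j+i) (by omega)).mp ih
        have h2' := aux_key (1-q) h9 h1 (j+i) (by omega) h1'
        have h3' : LfX q (j+i+1) < LfX q (j+i+1+1) :=
          (aux_Liff q hq0 hq1 (j+i+1) (by omega)).mpr (by exact_mod_cast h2')
        rw [show j + (i+1) = j+i+1 by omega]
        exact h3'
    have incr : ∀ d : ℕ, 1 ≤ d → LfX q j < LfX q (j+d) := by
      intro d hd
      induction d with
      | zero => exact absurd hd (by norm_num)
      | succ d ih =>
        rcases Nat.eq_or_lt_of_le hd with h | h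
        · have hd0 : d = 0 := by omega
          subst hd0
          rw [show j + (0+1) = j + 0 + 1 by omega]
          exact chain 0
        · have hd1 : 1 ≤ d := by omega
          rw [show j + (d+1) = j + d + 1 by omega]
          exact lt_trans (ih hd1) (chain d)
    have hjlt : LfX q j < LfX q kopt := by
      have h4 := incr (kopt - j) (by omega)
      rwa [Nat.add_sub_cancel' (le_of_lt hjk)] at h4
    exact absurd (hkopt j hj) (not_le.mpr hjlt)
  intro a b ha
  induction b with
  | zero => intro hab _; exact absurd hab (by omega)
  | succ b ih =>
    intro hab hbk
    rcases Nat.eq_or_lt_of_le hab with h | h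
    · rw [← h]
    · exact le_trans (step b (by omega) (by omega)) (ih (by omega) (by omega))

/-- Let `L̄(n) = q⌈log₂ n⌉/(1-(1-q)^{n-1})` and let `k_opt` minimize
`k ↦ qk/(1-(1-q)^{2^k-1})` over the positive integers.  If `n_max ≥ 2^{k_opt}`
then the minimum of `L̄` over `2 ≤ n ≤ n_max` is attained at `n = 2^{k_opt}`;
otherwise it is attained at `n = 2^{⌊log₂ n_max⌋}` or at `n = n_max`. -/
theorem stmt_17 (q : ℝ) (hq : q ∈ Set.Icc (1e-15 : ℝ) 0.1)
    (kopt : ℕ) (hkpos : 1 ≤ kopt)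
    (hkopt : ∀ k : ℕ, 1 ≤ k →
      q * (kopt : ℝ) / (1 - (1 - q) ^ (2 ^ kopt - 1)) ≤
        q * (k : ℝ) / (1 - (1 - q) ^ (2 ^ k - 1)))
    (nmax : ℕ) (hnmax : 2 ≤ nmax) :
    (2 ^ kopt ≤ nmax →
      ∀ n : ℕ, 2 ≤ n → n ≤ nmax →
        q * (Nat.clog 2 (2 ^ kopt) : ℝ) / (1 - (1 - q) ^ (2 ^ kopt - 1)) ≤
          q * (Nat.clog 2 n : ℝ) / (1 - (1 - q) ^ (n - 1))) ∧
    (nmax < 2 ^ kopt →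
      ∀ n : ℕ, 2 ≤ n → n ≤ nmax →
        min (q * (Nat.clog 2 (2 ^ Nat.log 2 nmax) : ℝ) /
              (1 - (1 - q) ^ (2 ^ Nat.log 2 nmax - 1)))
            (q * (Nat.clog 2 nmax : ℝ) / (1 - (1 - q) ^ (nmax - 1))) ≤
          q * (Nat.clog 2 n : ℝ) / (1 - (1 - q) ^ (n - 1))) := by
  obtain ⟨hq1, hq2⟩ := hq
  have hq0 : 0 < q := lt_of_lt_of_le (by norm_num) hq1
  have hmono := aux_dec q hq0 hq2 kopt (fun k hk => hkopt k hk)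
  have hden : ∀ j : ℕ, 1 ≤ j → 0 < 1 - (1-q)^j := fun j hj => aux_den_pos q hq0 hq2 j hj
  have hbar : ∀ n : ℕ, 2 ≤ n →
      LfX q (Nat.clog 2 n) ≤ q * (Nat.clog 2 n : ℝ) / (1 - (1-q)^(n-1)) := by
    intro n hn2
    have hk1 : 1 ≤ Nat.clog 2 n := Nat.clog_pos one_lt_two hn2
    have hnk : n ≤ 2 ^ Nat.clog 2 n := Nat.le_pow_clog one_lt_two n
    unfold LfX
    apply div_le_div_of_nonneg_left (mul_nonneg hq0.le (Nat.cast_nonneg _))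
      (hden (n-1) (by omega))
    have hpow : (1-q)^(2^(Nat.clog 2 n)-1) ≤ (1-q)^(n-1) :=
      pow_le_pow_of_le_one (by linarith) (by linarith) (by omega)
    linarith
  constructor
  · intro _ n hn2 hnle
    have hk1 : 1 ≤ Nat.clog 2 n := Nat.clog_pos one_lt_two hn2
    calc q * (Nat.clog 2 (2^kopt) : ℝ) / (1 - (1-q)^(2^kopt-1))
        = LfX q kopt := by rw [Nat.clog_pow 2 kopt one_lt_two]; rfl
      _ ≤ LfX q (Nat.clog 2 n) := hkopt _ hk1
      _ ≤ _ := hbar n hn2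
  · intro hlt n hn2 hnle
    have hl1 : 1 ≤ Nat.log 2 nmax := Nat.log_pos one_lt_two hnmax
    have hpl : 2 ^ Nat.log 2 nmax ≤ nmax := Nat.pow_log_le_self 2 (by omega)
    have hlk : Nat.log 2 nmax < kopt := by
      have h2 : 2 ^ Nat.log 2 nmax < 2 ^ kopt := lt_of_le_of_lt hpl hlt
      exact (Nat.pow_lt_pow_iff_right (by norm_num)).mp h2
    have hk1 : 1 ≤ Nat.clog 2 n := Nat.clog_pos one_lt_two hn2
    rcases le_or_gt (Nat.clog 2 n) (Nat.log 2 nmax) with hkl | hkl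
    · apply le_trans (min_le_left _ _)
      rw [Nat.clog_pow 2 (Nat.log 2 nmax) one_lt_two]
      have h1 : LfX q (Nat.log 2 nmax) ≤ LfX q (Nat.clog 2 n) :=
        hmono _ _ hk1 hkl (le_of_lt hlk)
      exact le_trans h1 (hbar n hn2)
    · have hnlt : nmax < 2 ^ (Nat.log 2 nmax + 1) := Nat.lt_pow_succ_log_self one_lt_two nmax
      have hkle : Nat.clog 2 n ≤ Nat.log 2 nmax + 1 := by
        have h3 := Nat.clog_mono_right 2 (le_of_lt (lt_of_le_of_lt hnle hnlt))
        rwa [Nat.clog_pow 2 (Nat.log 2 nmax + 1) one_lt_two] at h3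
      have hclognmax : Nat.clog 2 nmax = Nat.clog 2 n := by
        have hle' : Nat.clog 2 nmax ≤ Nat.log 2 nmax + 1 := by
          have h4 := Nat.clog_mono_right 2 (le_of_lt hnlt)
          rwa [Nat.clog_pow 2 (Nat.log 2 nmax + 1) one_lt_two] at h4
        have hge : Nat.clog 2 n ≤ Nat.clog 2 nmax := Nat.clog_mono_right 2 hnle
        omega
      apply le_trans (min_le_right _ _)
      rw [hclognmax]
      apply div_le_div_of_nonneg_left (mul_nonneg hq0.le (Nat.cast_nonneg _))
        (hden (n-1) (by omega))
      have hpow : (1-q)^(nmax-1) ≤ (1-q)^(n-1) :=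
        pow_le_pow_of_le_one (by linarith) (by linarith) (by omega)
      linarith
end
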